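/- Strassmann's theorem: a nonzero power series f(X) = Σ a_n X^n with coefficients a_n ∈ ℚ_p satisfying |a_n|_p → 0 has only finitely many zeros in ℤ_p. -/
import Mathlib

open Filter

namespace StrassmannAux

variable {p : ℕ} [Fact p.Prime]

lemma term_norm_le (b : ℚ_[p]) (x : ℤ_[p]) (n : ℕ) : ‖b * (x : ℚ_[p]) ^ n‖ ≤ ‖b‖ := by
  rw [norm_mul, norm_pow]
  exact mul_le_of_le_one_right (norm_nonneg _) (pow_le_one₀ (norm_nonneg _) x.property)

lemma summable_aux (b : ℕ → ℚ_[p]) (hlim : Tendsto (fun n => ‖b n‖) atTop (nhds 0))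
    (x : ℤ_[p]) : Summable (fun n => b n * (x : ℚ_[p]) ^ n) := by
  apply NonarchimedeanAddGroup.summable_of_tendsto_cofinite_zero
  rw [Nat.cofinite_eq_atTop, tendsto_zero_iff_norm_tendsto_zero]
  exact squeeze_zero (fun n => norm_nonneg _) (fun n => term_norm_le _ _ _) hlim

lemma norm_tsum_le_aux {b : ℕ → ℚ_[p]} {C : ℝ} (hC : 0 ≤ C) (h : ∀ n, ‖b n‖ ≤ C) :
    ‖∑' n, b n‖ ≤ C :=
  IsUltrametricDist.norm_tsum_le_of_forall_le_of_nonneg hC h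

lemma exists_max_index (b : ℕ → ℚ_[p]) (h0 : ∃ n, b n ≠ 0)
    (hlim : Tendsto (fun n => ‖b n‖) atTop (nhds 0)) :
    ∃ N, b N ≠ 0 ∧ (∀ n, ‖b n‖ ≤ ‖b N‖) ∧ ∀ n, N < n → ‖b n‖ < ‖b N‖ := by
  obtain ⟨n₀, hn₀⟩ := h0
  have hpos : 0 < ‖b n₀‖ := norm_pos_iff.mpr hn₀
  obtain ⟨K, hK⟩ := eventually_atTop.mp (hlim.eventually (gt_mem_nhds hpos))
  set K' := max K (n₀ + 1) with hK'
  have hn₀K : n₀ ∈ Finset.range K' := by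
    simp only [Finset.mem_range, hK']; omega
  have hs : (Finset.range K').Nonempty := ⟨n₀, hn₀K⟩
  set M := (Finset.range K').sup' hs (fun n => ‖b n‖) with hM
  have hn₀M : ‖b n₀‖ ≤ M := Finset.le_sup' (fun n => ‖b n‖) hn₀K
  have hbig : ∀ n, K' ≤ n → ‖b n‖ < M :=
    fun n hn => lt_of_lt_of_le (hK n (le_trans (le_max_left _ _) hn)) hn₀M
  have hles : ∀ n, ‖b n‖ ≤ M := by
    intro n
    rcases lt_or_ge n K' with h | h
    · exact Finset.le_sup' (fun n => ‖b n‖) (Finset.mem_range.mpr h)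
    · exact (hbig n h).le
  obtain ⟨m, hm, hmEq⟩ := Finset.exists_mem_eq_sup' hs (fun n => ‖b n‖)
  set T := (Finset.range K').filter (fun n => M ≤ ‖b n‖) with hT
  have hTne : T.Nonempty := ⟨m, Finset.mem_filter.mpr ⟨hm, le_of_eq hmEq⟩⟩
  set N := T.max' hTne with hN
  have hNT : N ∈ T := T.max'_mem hTne
  have hNM : ‖b N‖ = M :=
    le_antisymm (hles N) (Finset.mem_filter.mp hNT).2
  refine ⟨N, ?_, fun n => (hles n).trans_eq hNM.symm, fun n hn => ?_⟩
  · rw [← norm_pos_iff, hNM]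
    exact lt_of_lt_of_le hpos hn₀M
  · rw [hNM]
    rcases lt_or_ge n K' with h | h
    · have hnT : n ∉ T := fun hmem => absurd (Finset.le_max' T n hmem) (by omega)
      have := fun hMn : M ≤ ‖b n‖ => hnT (Finset.mem_filter.mpr ⟨Finset.mem_range.mpr h, hMn⟩)
      exact lt_of_not_ge (fun hMn => this hMn)
    · exact hbig n h

lemma tail_bound (b : ℕ → ℚ_[p]) (hlim : Tendsto (fun n => ‖b n‖) atTop (nhds 0)) (N : ℕ)
    (hb : b N ≠ 0) (hstrict : ∀ n, N < n → ‖b n‖ < ‖b N‖) :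
    ∃ B, 0 ≤ B ∧ B < ‖b N‖ ∧ ∀ n, N < n → ‖b n‖ ≤ B := by
  have hpos : 0 < ‖b N‖ := norm_pos_iff.mpr hb
  obtain ⟨K, hK⟩ := eventually_atTop.mp (hlim.eventually (gt_mem_nhds (half_pos hpos)))
  set s := insert (N + 1) (Finset.Ioo N K) with hs
  have hmem : (N + 1) ∈ s := Finset.mem_insert_self _ _
  have hsN : ∀ n ∈ s, N < n := by
    intro n hn
    rcases Finset.mem_insert.mp hn with h | h
    · omega
    · exact (Finset.mem_Ioo.mp h).1
  refine ⟨max (‖b N‖ / 2) (s.sup' ⟨_, hmem⟩ (fun n => ‖b n‖)), ?_, ?_, ?_⟩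
  · exact le_trans (by positivity) (le_max_left _ _)
  · exact max_lt (half_lt_self hpos)
      ((Finset.sup'_lt_iff _).mpr (fun n hn => hstrict n (hsN n hn)))
  · intro n hn
    rcases lt_or_ge n K with h | h
    · exact le_trans (Finset.le_sup' (fun n => ‖b n‖) (Finset.mem_insert.mpr (Or.inr
        (Finset.mem_Ioo.mpr ⟨hn, h⟩)))) (le_max_right _ _)
    · exact le_trans (hK n h).le (le_max_left _ _)

lemma key (N : ℕ) : ∀ (a : ℕ → ℚ_[p]),
    Tendsto (fun n => ‖a n‖) atTop (nhds 0) → a N ≠ 0 →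
    (∀ n, ‖a n‖ ≤ ‖a N‖) → (∀ n, N < n → ‖a n‖ < ‖a N‖) →
    {x : ℤ_[p] | ∑' n, a n * (x : ℚ_[p]) ^ n = 0}.Finite := by
  induction N using Nat.strong_induction_on with
  | _ N IH =>
  intro a hlim haN hmax hstrict
  by_cases hne : ({x : ℤ_[p] | ∑' n, a n * (x : ℚ_[p]) ^ n = 0}).Nonempty
  swap
  · rw [Set.not_nonempty_iff_eq_empty] at hne
    rw [hne]; exact Set.finite_empty
  obtain ⟨x₀, hx₀⟩ := hne
  simp only [Set.mem_setOf_eq] at hx₀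
  have haNpos : 0 < ‖a N‖ := norm_pos_iff.mpr haN
  obtain ⟨B, hB0, hBlt, hBtail⟩ := tail_bound a hlim N haN hstrict
  have hshift : ∀ i : ℕ, Tendsto (fun n => ‖a (n + i)‖) atTop (nhds 0) := fun i =>
    hlim.comp (tendsto_add_atTop_nat i)
  rcases Nat.eq_zero_or_pos N with hN0 | hNpos
  · exfalso
    subst hN0
    have hsum := summable_aux a hlim x₀
    have h1 := Summable.tsum_eq_zero_add hsum
    rw [hx₀, pow_zero, mul_one] at h1
    have h2 : a 0 = - ∑' n, a (n + 1) * (x₀ : ℚ_[p]) ^ (n + 1) :=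
      eq_neg_of_add_eq_zero_left h1.symm
    have h3 : ‖a 0‖ ≤ B := by
      rw [h2, norm_neg]
      exact norm_tsum_le_aux hB0 (fun n =>
        (term_norm_le _ _ _).trans (hBtail _ (Nat.succ_pos n)))
    exact absurd (h3.trans_lt hBlt) (lt_irrefl _)
  set y₀ : ℚ_[p] := (x₀ : ℚ_[p]) with hy₀
  set c : ℕ → ℚ_[p] := fun i => ∑' n, a (n + i + 1) * y₀ ^ n with hc
  have hc_le : ∀ i, ‖c i‖ ≤ ‖a N‖ := fun i =>
    norm_tsum_le_aux haNpos.le (fun n => (term_norm_le _ _ _).trans (hmax _))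
  have hc_tail : ∀ i, N ≤ i → ‖c i‖ ≤ B := fun i hi =>
    norm_tsum_le_aux hB0 (fun n =>
      (term_norm_le _ _ _).trans (hBtail _ (by omega)))
  have hcN1 : ‖c (N - 1)‖ = ‖a N‖ := by
    have e1 : c (N - 1) = ∑' n, a (n + N) * y₀ ^ n := by
      rw [hc]
      refine tsum_congr (fun n => ?_)
      congr 2
      omega
    have hsum : Summable (fun n => a (n + N) * y₀ ^ n) := summable_aux _ (hshift N) x₀
    have e2 := Summable.tsum_eq_zero_add hsum
    rw [zero_add, pow_zero, mul_one] at e2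
    have hTle : ‖∑' n, a (n + 1 + N) * y₀ ^ (n + 1)‖ ≤ B :=
      norm_tsum_le_aux hB0 (fun n =>
        (term_norm_le _ _ _).trans (hBtail _ (by omega)))
    rw [e1, e2, Padic.add_eq_max_of_ne (by
      intro h
      rw [h] at haNpos
      exact absurd (hTle.trans_lt hBlt) (by rw [h]; exact lt_irrefl _)), max_eq_left]
    exact hTle.trans hBlt.le
  have hclim : Tendsto (fun i => ‖c i‖) atTop (nhds 0) := by
    rw [Metric.tendsto_atTop]
    intro ε hε
    obtain ⟨K, hK⟩ := eventually_atTop.mp (hlim.eventually (gt_mem_nhds (half_pos hε)))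
    refine ⟨K, fun i hi => ?_⟩
    rw [Real.dist_eq, sub_zero, abs_of_nonneg (norm_nonneg _)]
    have : ‖c i‖ ≤ ε / 2 :=
      norm_tsum_le_aux (by positivity) (fun n =>
        (term_norm_le _ _ _).trans (hK _ (by omega)).le)
    linarith
  obtain ⟨Nc, hcNc, hcmax, hcstrict⟩ := exists_max_index c
    ⟨N - 1, by rw [← norm_pos_iff, hcN1]; exact haNpos⟩ hclim
  have hNc_lt : Nc < N := by
    by_contra h
    push_neg at h
    have h1 : ‖a N‖ ≤ ‖c Nc‖ := hcN1 ▸ hcmax (N - 1)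
    have h2 : ‖c Nc‖ ≤ B := hc_tail Nc h
    exact absurd ((h1.trans h2).trans_lt hBlt) (lt_irrefl _)
  have hg_fin := IH Nc hNc_lt c hclim hcNc hcmax hcstrict
  have hfac : ∀ x : ℤ_[p], ∑' n, a n * (x : ℚ_[p]) ^ n
      = (∑' i, c i * (x : ℚ_[p]) ^ i) * ((x : ℚ_[p]) - y₀) := by
    intro x
    set y : ℚ_[p] := (x : ℚ_[p]) with hy
    have hsx := summable_aux a hlim x
    have hsx₀ := summable_aux a hlim x₀
    set F : ℕ × ℕ → ℚ_[p] := fun q =>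
      if q.2 < q.1 then a q.1 * (y ^ q.2 * y₀ ^ (q.1 - 1 - q.2)) else 0 with hF
    have hFnorm : ∀ q : ℕ × ℕ, ‖F q‖ ≤ ‖a q.1‖ := by
      intro q
      rw [hF]
      dsimp only
      split
      · rw [norm_mul]
        refine mul_le_of_le_one_right (norm_nonneg _) ?_
        rw [norm_mul, norm_pow, norm_pow]
        have h1 : ‖y‖ ≤ 1 := x.property
        have h2 : ‖y₀‖ ≤ 1 := x₀.property
        calc ‖y‖ ^ q.2 * ‖y₀‖ ^ (q.1 - 1 - q.2)
            ≤ 1 * 1 := by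
              gcongr
              · exact pow_le_one₀ (norm_nonneg _) h1
              · exact pow_le_one₀ (norm_nonneg _) h2
          _ = 1 := mul_one 1
      · simp
    have hFs : Summable F := by
      apply NonarchimedeanAddGroup.summable_of_tendsto_cofinite_zero
      rw [Metric.tendsto_nhds]
      intro ε hε
      rw [Filter.eventually_cofinite]
      have hT : {n : ℕ | ¬ ‖a n‖ < ε}.Finite := by
        have h := hlim.eventually (gt_mem_nhds hε)
        rw [← Nat.cofinite_eq_atTop] at h
        exact Filter.eventually_cofinite.mp h
      apply Set.Finite.subset (Set.Finite.biUnion hT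
        (fun n _ => (Set.finite_Iio n).image (fun i => (n, i))))
      intro q hq
      simp only [Set.mem_setOf_eq, dist_zero_right, not_lt] at hq
      have hqlt : q.2 < q.1 := by
        by_contra hcon
        have : F q = 0 := by rw [hF]; simp [hcon]
        rw [this, norm_zero] at hq
        exact absurd (lt_of_lt_of_le hε hq) (lt_irrefl _)
      refine Set.mem_biUnion (show q.1 ∈ {n : ℕ | ¬ ‖a n‖ < ε} from
        not_lt.mpr (hq.trans (hFnorm q))) ⟨q.2, hqlt, by simp⟩
    have hrow : ∀ n : ℕ, ∑' i, F (n, i) = ∑ i ∈ Finset.range n, a n * (y ^ i * y₀ ^ (n - 1 - i)) := by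
      intro n
      rw [tsum_eq_sum (s := Finset.range n) (fun i hi => by
        rw [hF]; simp [Finset.mem_range.not.mp hi])]
      refine Finset.sum_congr rfl (fun i hi => ?_)
      rw [hF]
      simp [Finset.mem_range.mp hi]
    have hcol : ∀ i : ℕ, ∑' n, F (n, i) = y ^ i * c i := by
      intro i
      have hinj : Function.Injective (fun m : ℕ => m + (i + 1)) :=
        add_left_injective (i + 1)
      have hvanish : ∀ n ∉ Set.range (fun m : ℕ => m + (i + 1)), F (n, i) = 0 := by
        intro n hn
        have : ¬ i < n := by
          intro hlt
          exact hn ⟨n - (i + 1), by show n - (i + 1) + (i + 1) = n; omega⟩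
        rw [hF]
        simp [this]
      rw [← hinj.tsum_eq (Function.support_subset_iff'.mpr hvanish)]
      have : ∀ m : ℕ, F (m + (i + 1), i) = y ^ i * (a (m + i + 1) * y₀ ^ m) := by
        intro m
        rw [hF]
        have h1 : i < m + (i + 1) := by omega
        have h2 : m + (i + 1) - 1 - i = m := by omega
        simp only [h1, if_true, h2]
        have h3 : m + (i + 1) = m + i + 1 := by omega
        rw [h3]
        ring
      rw [tsum_congr this, tsum_mul_left]
    calc ∑' n, a n * y ^ n
        = ∑' n, a n * y ^ n - ∑' n, a n * y₀ ^ n := by rw [hx₀, sub_zero]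
      _ = ∑' n, (a n * y ^ n - a n * y₀ ^ n) := (Summable.tsum_sub hsx hsx₀).symm
      _ = ∑' n, (∑ i ∈ Finset.range n, a n * (y ^ i * y₀ ^ (n - 1 - i))) * (y - y₀) := by
          refine tsum_congr (fun n => ?_)
          rw [← mul_sub, ← geom_sum₂_mul y y₀ n, ← mul_assoc, Finset.mul_sum]
      _ = (∑' n, ∑ i ∈ Finset.range n, a n * (y ^ i * y₀ ^ (n - 1 - i))) * (y - y₀) :=
          tsum_mul_right
      _ = (∑' n, ∑' i, F (n, i)) * (y - y₀) := by
          congr 1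
          exact tsum_congr (fun n => (hrow n).symm)
      _ = (∑' i, ∑' n, F (n, i)) * (y - y₀) := by
          congr 1
          exact (Summable.tsum_comm (f := fun n i => F (n, i)) hFs).symm
      _ = (∑' i, y ^ i * c i) * (y - y₀) := by
          congr 1
          exact tsum_congr hcol
      _ = (∑' i, c i * y ^ i) * (y - y₀) := by
          congr 1
          exact tsum_congr (fun i => mul_comm _ _)
  have hsub : {x : ℤ_[p] | ∑' n, a n * (x : ℚ_[p]) ^ n = 0}
      ⊆ insert x₀ {x : ℤ_[p] | ∑' i, c i * (x : ℚ_[p]) ^ i = 0} := by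
    intro x hx
    rw [Set.mem_setOf_eq, hfac x] at hx
    rcases mul_eq_zero.mp hx with h | h
    · exact Or.inr h
    · exact Or.inl (Subtype.coe_injective (sub_eq_zero.mp h))
  exact ((hg_fin.insert x₀).subset hsub)

end StrassmannAux

/-- Strassmann: a nonzero power series `Σ a n X^n` with `a n ∈ ℚ_p` and
`‖a n‖ → 0` has only finitely many zeros in `ℤ_p`. -/
theorem statement8 {p : ℕ} [Fact p.Prime] (a : ℕ → ℚ_[p])
    (h0 : ∃ n, a n ≠ 0)
    (hlim : Filter.Tendsto (fun n => ‖a n‖) Filter.atTop (nhds 0)) :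
    {x : ℤ_[p] | ∑' n, a n * (x : ℚ_[p]) ^ n = 0}.Finite := by
  obtain ⟨N, hN0, hmax, hstrict⟩ := StrassmannAux.exists_max_index a h0 hlim
  exact StrassmannAux.key N a hlim hN0 hmax hstrict
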